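/- arXiv:2509.08936 — 2 statements merged into one kernel-verified Lean document; each statement's English description precedes it below -/
import Mathlib

section
/- Let d ≥ 2 and let p ∈ ℙ^d, v ∈ (ℙ^{d-1})². Then (p, v) belongs to the quasi-Trefftz space 𝕊_d (defined by 𝒯_{d-1}(-iωρ v_x + ∂_x p) = 0, 𝒯_{d-1}(-iωρ v_y + ∂_y p) = 0, 𝒯_{d-2}(-(iω/(ρc²)) p + ∇·v) = 0 at x₀) if and only if 𝒯_{d-2}(-Δp - (ω²/c²)p) = 0 and iωρ v = ∇p. -/
/-! Evaluating a polynomial at real points turns `pderiv` into the Fréchet partial derivative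
`pd`, so a truncated condition `𝒯_q(r) = 0` on a polynomial `r` of degree `≤ q` says that all
derivatives of `r` of order `≤ q` vanish at `x₀`. By induction on `q` this forces `r = 0`: the
first partial derivatives of `r` have degree `≤ q - 1`, so they vanish and `r` is a constant,
namely `r(x₀) = 0`. The two first-order conditions have degree `≤ d - 1` and hence say exactly
`iωρ v = ∇p`; substituting `v = ∇p / (iωρ)` turns the divergence condition into `-(iωρ)⁻¹`
times the Helmholtz condition. -/

open MvPolynomial Complex

/-- Partial derivative in direction `i` of a function on `ℝ × ℝ`. -/
noncomputable def pd (i : Fin 2) (f : ℝ × ℝ → ℂ) : ℝ × ℝ → ℂ :=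
  fun x => fderiv ℝ f x (if i = 0 then ((1 : ℝ), (0 : ℝ)) else ((0 : ℝ), (1 : ℝ)))

/-- `taylorZero q f x₀` says that the Taylor truncation of order `q` of `f` at `x₀`
vanishes, i.e. all partial derivatives of `f` of total order `≤ q` vanish at `x₀`. -/
noncomputable def taylorZero (q : ℕ) (f : ℝ × ℝ → ℂ) (x₀ : ℝ × ℝ) : Prop :=
  ∀ a b : ℕ, a + b ≤ q → (pd 0)^[a] ((pd 1)^[b] f) x₀ = 0

/-- Evaluation of a two-variable complex polynomial at a real point. -/
noncomputable def pev (p : MvPolynomial (Fin 2) ℂ) (x : ℝ × ℝ) : ℂ :=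
  MvPolynomial.eval ![(x.1 : ℂ), (x.2 : ℂ)] p

namespace MvPolynomial

variable {σ R : Type*}

theorem totalDegree_pderiv_le [CommSemiring R] (i : σ) (r : MvPolynomial σ R) :
    (pderiv i r).totalDegree ≤ r.totalDegree - 1 := by
  refine Finset.sup_le fun m hm => ?_
  rw [mem_support_iff, coeff_pderiv] at hm
  have h := le_totalDegree (mem_support_iff.mpr (left_ne_zero_of_mul hm))
  rw [Finsupp.sum_add_index' (fun _ => rfl) (fun _ _ _ => rfl),
    Finsupp.sum_single_index rfl] at h
  omega

theorem pderiv_pderiv_comm [CommRing R] (i j : σ) (r : MvPolynomial σ R) :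
    pderiv i (pderiv j r) = pderiv j (pderiv i r) := by
  classical
  have h : ⁅pderiv i, pderiv j⁆ = (0 : Derivation R (MvPolynomial σ R) (MvPolynomial σ R)) :=
    derivation_ext fun k => by
      rw [Derivation.commutator_apply, pderiv_X, pderiv_X, Pi.single_apply, Pi.single_apply]
      split_ifs <;> simp
  have := congr($h r)
  rwa [Derivation.commutator_apply, Derivation.zero_apply, sub_eq_zero] at this

theorem eq_C_of_forall_pderiv_eq_zero [CommRing R] [IsAddTorsionFree R] {r : MvPolynomial σ R}
    (h : ∀ i, pderiv i r = 0) : r = C (coeff 0 r) := by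
  classical
  refine coe_injective σ R (MvPowerSeries.pderiv.ext (fun i => ?_) ?_)
  · rw [MvPowerSeries.pderiv_coe, MvPowerSeries.pderiv_coe, h, pderiv_C]
  · rw [← MvPowerSeries.coeff_zero_eq_constantCoeff_apply, coeff_coe, coe_C,
      ← MvPowerSeries.coeff_zero_eq_constantCoeff_apply, MvPowerSeries.coeff_C, if_pos rfl]

theorem eq_zero_of_eval_iterate_pderiv_eq_zero [CommRing R] [IsAddTorsionFree R]
    (x : Fin 2 → R) (n : ℕ) {r : MvPolynomial (Fin 2) R} (hr : r.totalDegree ≤ n)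
    (h : ∀ a b, a + b ≤ n → eval x ((pderiv 0)^[a] ((pderiv 1)^[b] r)) = 0) : r = 0 := by
  suffices hconst : r = C (coeff 0 r) by
    have h00 := h 0 0 n.zero_le
    rw [Function.iterate_zero_apply, Function.iterate_zero_apply, hconst, eval_C] at h00
    rw [hconst, h00, C_0]
  cases n with
  | zero => exact totalDegree_eq_zero_iff_eq_C.mp (Nat.le_zero.mp hr)
  | succ n =>
    have hcomm : Function.Commute (pderiv 1 : MvPolynomial (Fin 2) R → _) (pderiv 0) :=
      fun s => pderiv_pderiv_comm 1 0 s
    refine eq_C_of_forall_pderiv_eq_zero (Fin.forall_fin_two.mpr ⟨?_, ?_⟩)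
    · refine eq_zero_of_eval_iterate_pderiv_eq_zero x n
        ((totalDegree_pderiv_le 0 r).trans (by omega)) fun a b hab => ?_
      rw [(hcomm.iterate_left b).eq, ← Function.iterate_succ_apply]
      exact h (a + 1) b (by omega)
    · refine eq_zero_of_eval_iterate_pderiv_eq_zero x n
        ((totalDegree_pderiv_le 1 r).trans (by omega)) fun a b hab => ?_
      rw [← Function.iterate_succ_apply]
      exact h a (b + 1) (by omega)

end MvPolynomial

section Derivative

open ContinuousLinearMap

theorem hasFDerivAt_pev_X (i : Fin 2) (x : ℝ × ℝ) :
    HasFDerivAt (pev (X i)) ((toSpanSingleton ℝ (pev (pderiv 0 (X i)) x)).coprod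
      (toSpanSingleton ℝ (pev (pderiv 1 (X i)) x))) x := by
  match i with
  | 0 =>
    rw [show pev (X 0) = ofRealCLM ∘L fst ℝ ℝ ℝ from funext fun y => by simp [pev]]
    exact (ofRealCLM ∘L fst ℝ ℝ ℝ).hasFDerivAt.congr_fderiv (ext fun v => by simp [pev])
  | 1 =>
    rw [show pev (X 1) = ofRealCLM ∘L snd ℝ ℝ ℝ from funext fun y => by simp [pev]]
    exact (ofRealCLM ∘L snd ℝ ℝ ℝ).hasFDerivAt.congr_fderiv (ext fun v => by simp [pev])

theorem hasFDerivAt_pev (p : MvPolynomial (Fin 2) ℂ) (x : ℝ × ℝ) :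
    HasFDerivAt (pev p)
      ((toSpanSingleton ℝ (pev (pderiv 0 p) x)).coprod (toSpanSingleton ℝ (pev (pderiv 1 p) x)))
      x := by
  induction p using MvPolynomial.induction_on with
  | C a =>
    rw [show pev (C a) = fun _ => a from funext fun y => eval_C a]
    exact (hasFDerivAt_const a x).congr_fderiv (ext fun v => by simp [pev])
  | add p q hp hq =>
    rw [show pev (p + q) = pev p + pev q from funext fun y => eval_add]
    refine (hp.add hq).congr_fderiv (ext fun v => ?_)
    simp only [pev, map_add, add_apply, coprod_apply, toSpanSingleton_apply, real_smul, smul_add]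
    ring
  | mul_X p i hp =>
    rw [show pev (p * X i) = pev p * pev (X i) from funext fun y => eval_mul]
    refine (hp.mul (hasFDerivAt_pev_X i x)).congr_fderiv (ext fun v => ?_)
    simp only [pev, Derivation.leibniz, map_add, map_mul, add_apply, smul_apply, coprod_apply,
      toSpanSingleton_apply, real_smul, smul_eq_mul, smul_add]
    ring

end Derivative

theorem pd_pev (i : Fin 2) (p : MvPolynomial (Fin 2) ℂ) : pd i (pev p) = pev (pderiv i p) := by
  funext x
  fin_cases i <;> simp [pd, (hasFDerivAt_pev p x).fderiv]

theorem iterate_pd_iterate_pd_pev (a b : ℕ) (p : MvPolynomial (Fin 2) ℂ) :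
    (pd 0)^[a] ((pd 1)^[b] (pev p)) = pev ((pderiv 0)^[a] ((pderiv 1)^[b] p)) := by
  have hsemi : ∀ i, Function.Semiconj pev (pderiv i) (pd i) := fun i q => (pd_pev i q).symm
  rw [← ((hsemi 1).iterate_right b).eq, ← ((hsemi 0).iterate_right a).eq]

theorem taylorZero_pev_iff (x₀ : ℝ × ℝ) {n : ℕ} {r : MvPolynomial (Fin 2) ℂ}
    (hr : r.totalDegree ≤ n) : taylorZero n (pev r) x₀ ↔ r = 0 := by
  refine ⟨fun h => eq_zero_of_eval_iterate_pderiv_eq_zero ![(x₀.1 : ℂ), (x₀.2 : ℂ)] n hr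
    fun a b hab => ?_, ?_⟩
  · rw [← h a b hab, iterate_pd_iterate_pd_pev]
    rfl
  · rintro rfl a b -
    simp [iterate_pd_iterate_pd_pev, pev]

theorem pd_smul (i : Fin 2) (a : ℂ) (f : ℝ × ℝ → ℂ) : pd i (a • f) = a • pd i f := by
  funext x
  simp [pd, fderiv_const_smul_field]

theorem taylorZero_smul_iff (q : ℕ) (x₀ : ℝ × ℝ) {a : ℂ} (ha : a ≠ 0) (f : ℝ × ℝ → ℂ) :
    taylorZero q (a • f) x₀ ↔ taylorZero q f x₀ := by
  have hcomm : ∀ i, Function.Commute (a • · : (ℝ × ℝ → ℂ) → _) (pd i) :=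
    fun i g => (pd_smul i a g).symm
  have hsmul : ∀ k l, (pd 0)^[k] ((pd 1)^[l] (a • f)) x₀ = a * (pd 0)^[k] ((pd 1)^[l] f) x₀ :=
    fun k l => by
      rw [← ((hcomm 1).iterate_right l).eq, ← ((hcomm 0).iterate_right k).eq]
      rfl
  simp only [taylorZero, hsmul, mul_eq_zero, ha, false_or]

theorem taylorZero_neg_mul_add_pd_iff (x₀ : ℝ × ℝ) (i : Fin 2) (K : ℂ) {n : ℕ}
    {p w : MvPolynomial (Fin 2) ℂ} (hp : p.totalDegree ≤ n + 1) (hw : w.totalDegree ≤ n) :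
    taylorZero n (fun x => -K * pev w x + pd i (pev p) x) x₀ ↔ C K * w = pderiv i p := by
  have hdeg : (pderiv i p - C K * w).totalDegree ≤ n :=
    (totalDegree_sub _ _).trans (max_le ((totalDegree_pderiv_le i p).trans (by omega))
      ((totalDegree_mul _ _).trans (by rwa [totalDegree_C, zero_add])))
  have hfun : (fun x => -K * pev w x + pd i (pev p) x) = pev (pderiv i p - C K * w) := by
    funext x
    simp only [pd_pev, pev, map_sub, map_mul, eval_C]
    ring
  rw [hfun, taylorZero_pev_iff x₀ hdeg, sub_eq_zero, eq_comm]

theorem taylorZero_divergence_iff_helmholtz (x₀ : ℝ × ℝ) (q : ℕ) {ω ρ : ℝ} (hω : ω ≠ 0)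
    (hρ : ρ ≠ 0) (c : ℝ × ℝ → ℝ) {p vx vy : MvPolynomial (Fin 2) ℂ}
    (hvx : C (I * ω * ρ) * vx = pderiv 0 p) (hvy : C (I * ω * ρ) * vy = pderiv 1 p) :
    taylorZero q (fun x => -(I * ω / (ρ * (c x : ℂ) ^ 2)) * pev p x
        + pd 0 (pev vx) x + pd 1 (pev vy) x) x₀ ↔
      taylorZero q (fun x => -(pd 0 (pd 0 (pev p)) x + pd 1 (pd 1 (pev p)) x)
        - ((ω : ℂ) ^ 2 / (c x : ℂ) ^ 2) * pev p x) x₀ := by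
  have hK : I * ω * ρ ≠ 0 := by simp [hω, hρ]
  have hv : ∀ {i w}, C (I * ω * ρ) * w = pderiv i p → w = C (I * ω * ρ)⁻¹ * pderiv i p :=
    fun h => by rw [← h, ← mul_assoc, ← C_mul, inv_mul_cancel₀ hK, C_1, one_mul]
  have hcoef : ∀ z : ℂ, I * ω / (ρ * z ^ 2) = -(I * ω * ρ)⁻¹ * ((ω : ℂ) ^ 2 / z ^ 2) := by
    intro z
    rw [mul_inv, mul_inv, inv_I]
    field_simp
  refine Iff.trans ?_ (taylorZero_smul_iff q x₀ (neg_ne_zero.mpr (inv_ne_zero hK)) _)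
  congr! 1
  funext x
  simp only [pd_pev, hv hvx, hv hvy, pderiv_C_mul, pev, map_mul, eval_C, Pi.smul_apply,
    smul_eq_mul, hcoef]
  ring

theorem quasiTrefftz_space_characterization_general
    (x₀ : ℝ × ℝ) (d : ℕ)
    (ω ρ : ℝ) (hω : ω ≠ 0) (hρ : 0 < ρ)
    (c : ℝ × ℝ → ℝ)
    (p vx vy : MvPolynomial (Fin 2) ℂ)
    (hp : p.totalDegree ≤ d) (hvx : vx.totalDegree ≤ d - 1) (hvy : vy.totalDegree ≤ d - 1) :
    (taylorZero (d - 1)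
        (fun x => -(Complex.I * ω * ρ) * pev vx x + pd 0 (pev p) x) x₀ ∧
     taylorZero (d - 1)
        (fun x => -(Complex.I * ω * ρ) * pev vy x + pd 1 (pev p) x) x₀ ∧
     taylorZero (d - 2)
        (fun x => -(Complex.I * ω / (ρ * (c x : ℂ) ^ 2)) * pev p x
            + pd 0 (pev vx) x + pd 1 (pev vy) x) x₀)
    ↔
    (taylorZero (d - 2)
        (fun x => -(pd 0 (pd 0 (pev p)) x + pd 1 (pd 1 (pev p)) x)
            - ((ω : ℂ) ^ 2 / (c x : ℂ) ^ 2) * pev p x) x₀ ∧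
     C (Complex.I * ω * ρ) * vx = pderiv 0 p ∧
     C (Complex.I * ω * ρ) * vy = pderiv 1 p) := by
  have hp' : p.totalDegree ≤ d - 1 + 1 := by omega
  rw [taylorZero_neg_mul_add_pd_iff x₀ 0 _ hp' hvx, taylorZero_neg_mul_add_pd_iff x₀ 1 _ hp' hvy]
  constructor
  · rintro ⟨hx, hy, hdiv⟩
    exact ⟨(taylorZero_divergence_iff_helmholtz x₀ _ hω hρ.ne' c hx hy).mp hdiv, hx, hy⟩
  · rintro ⟨hhelm, hx, hy⟩
    exact ⟨hx, hy, (taylorZero_divergence_iff_helmholtz x₀ _ hω hρ.ne' c hx hy).mpr hhelm⟩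

/-- For `d ≥ 2`, `p ∈ ℙ^d`, `(v_x, v_y) ∈ (ℙ^{d-1})²`, membership in the
quasi-Trefftz space `𝕊_d` (the three truncated conditions of the first-order system at `x₀`)
is equivalent to `𝒯_{d-2}(-Δp - (ω²/c²)p) = 0` together with `iωρ v = ∇p`. -/
theorem quasiTrefftz_space_characterization
    (x₀ : ℝ × ℝ) (d : ℕ) (hd : 2 ≤ d)
    (ω ρ : ℝ) (hω : ω ≠ 0) (hρ : 0 < ρ)
    (c : ℝ × ℝ → ℝ) (hc : ContDiffAt ℝ (d - 2) c x₀) (hc0 : c x₀ ≠ 0)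
    (p vx vy : MvPolynomial (Fin 2) ℂ)
    (hp : p.totalDegree ≤ d) (hvx : vx.totalDegree ≤ d - 1) (hvy : vy.totalDegree ≤ d - 1) :
    (taylorZero (d - 1)
        (fun x => -(Complex.I * ω * ρ) * pev vx x + pd 0 (pev p) x) x₀ ∧
     taylorZero (d - 1)
        (fun x => -(Complex.I * ω * ρ) * pev vy x + pd 1 (pev p) x) x₀ ∧
     taylorZero (d - 2)
        (fun x => -(Complex.I * ω / (ρ * (c x : ℂ) ^ 2)) * pev p x
            + pd 0 (pev vx) x + pd 1 (pev vy) x) x₀)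
    ↔
    (taylorZero (d - 2)
        (fun x => -(pd 0 (pd 0 (pev p)) x + pd 1 (pd 1 (pev p)) x)
            - ((ω : ℂ) ^ 2 / (c x : ℂ) ^ 2) * pev p x) x₀ ∧
     C (Complex.I * ω * ρ) * vx = pderiv 0 p ∧
     C (Complex.I * ω * ρ) * vy = pderiv 1 p) :=
  quasiTrefftz_space_characterization_general x₀ d ω ρ hω hρ c p vx vy hp hvx hvy
end

section
/- Let d ≥ 2 and let (p, v_x, v_y) ∈ C^{d+1} × C^d × C^d be an exact solution of the system S₁ = S₂ = S₃ = 0 in a neighborhood of x₀, where S₁ = -iωρ v_x + ∂_x p, S₂ = -iωρ v_y + ∂_y p, S₃ = -(iω/(ρc²)) p + ∂_x v_x + ∂_y v_y. Then the truncated Taylor polynomials (𝒯_d p, 𝒯_{d-1} v_x, 𝒯_{d-1} v_y) satisfy the quasi-Trefftz conditions 𝒯_{d-1}(S_i applied to the truncations) = 0 for i = 1,2 and 𝒯_{d-2}(S₃ applied to the truncations) = 0. -/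
open Complex

/-- The Taylor polynomial of order `q` of `f` at `x₀`, as a function on `ℝ × ℝ`. -/
noncomputable def tpoly (q : ℕ) (f : ℝ × ℝ → ℂ) (x₀ : ℝ × ℝ) : ℝ × ℝ → ℂ :=
  fun x => ∑ a ∈ Finset.range (q + 1), ∑ b ∈ Finset.range (q + 1 - a),
    ((pd 0)^[a] ((pd 1)^[b] f) x₀) / ((a.factorial * b.factorial : ℕ) : ℂ)
      * ((x.1 - x₀.1 : ℝ) : ℂ) ^ a * ((x.2 - x₀.2 : ℝ) : ℂ) ^ b

/-!
The Taylor polynomial `tpoly q f x₀` has the same partial derivatives of order `≤ q` at `x₀` as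
`f`. Having the same `n`-jet at `x₀` is preserved by sums, by multiplication with a `C^n`
function (Leibniz rule) and, at the cost of one order, by partial derivatives (Schwarz's theorem).
Substituting the truncations into `S₁, S₂, S₃` therefore leaves the jets of order `d - 1`, `d - 1`,
`d - 2` at `x₀` unchanged, and the jets of the exact residuals vanish because these residuals are
zero near `x₀`.
-/

open Filter Topology

section PartialDerivatives

variable {f g : ℝ × ℝ → ℂ} {x : ℝ × ℝ}

theorem pd_add (hf : DifferentiableAt ℝ f x) (hg : DifferentiableAt ℝ g x) (i : Fin 2) :
    pd i (fun y => f y + g y) x = pd i f x + pd i g x := by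
  simp only [pd, fderiv_fun_add hf hg]
  rfl

theorem pd_mul (hf : DifferentiableAt ℝ f x) (hg : DifferentiableAt ℝ g x) (i : Fin 2) :
    pd i (fun y => f y * g y) x = pd i f x * g x + f x * pd i g x := by
  simp only [pd, fderiv_fun_mul hf hg, add_apply, smul_apply, smul_eq_mul]
  ring

theorem pd_zero_fun (i : Fin 2) : pd i 0 = 0 := by
  ext x
  simp [pd]

theorem pd_iterate_zero_fun (i : Fin 2) (k : ℕ) : (pd i)^[k] 0 = 0 :=
  Function.iterate_fixed (pd_zero_fun i) k

theorem pd_fst_pd_snd_comm (hf : ContDiffAt ℝ 2 f x) : pd 0 (pd 1 f) x = pd 1 (pd 0 f) x := by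
  have hdiff : DifferentiableAt ℝ (fderiv ℝ f) x :=
    (hf.fderiv_right (m := 1) (by norm_num)).differentiableAt (by norm_num)
  have hpd (v w : ℝ × ℝ) :
      fderiv ℝ (fun y => fderiv ℝ f y w) x v = fderiv ℝ (fderiv ℝ f) x v w := by
    rw [fderiv_clm_apply hdiff (differentiableAt_const w)]
    simp
  unfold pd
  simp only [hpd]
  exact (hf.isSymmSndFDerivAt (by simp [minSmoothness_of_isRCLikeNormedField])).eq _ _

theorem eventuallyEq_pd (h : f =ᶠ[𝓝 x] g) (i : Fin 2) : pd i f =ᶠ[𝓝 x] pd i g := by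
  filter_upwards [h.fderiv (𝕜 := ℝ)] with y hy
  simp only [pd, hy]

theorem eventuallyEq_pd_iterate (h : f =ᶠ[𝓝 x] g) (i : Fin 2) (k : ℕ) :
    (pd i)^[k] f =ᶠ[𝓝 x] (pd i)^[k] g := by
  induction k generalizing f g with
  | zero => exact h
  | succ k ih => exact ih (eventuallyEq_pd h i)

theorem contDiffAt_pd {n : ℕ} (hf : ContDiffAt ℝ (n + 1 : ℕ) f x) (i : Fin 2) :
    ContDiffAt ℝ n (pd i f) x :=
  (hf.fderiv_right (by push_cast; rfl)).clm_apply contDiffAt_const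

theorem contDiffAt_pd_iterate {n k : ℕ} (hf : ContDiffAt ℝ (n + k : ℕ) f x) (i : Fin 2) :
    ContDiffAt ℝ n ((pd i)^[k] f) x := by
  induction k generalizing f with
  | zero => simpa using hf
  | succ k ih => exact ih (contDiffAt_pd hf i)

theorem ContDiffAt.eventually_differentiableAt {n : ℕ} (hf : ContDiffAt ℝ (n + 1 : ℕ) f x) :
    ∀ᶠ y in 𝓝 x, DifferentiableAt ℝ f y :=
  (hf.eventually (by simp)).mono fun _ hy => hy.differentiableAt (by simp)

theorem pd_add_eventuallyEq {n : ℕ} (hf : ContDiffAt ℝ (n + 1 : ℕ) f x)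
    (hg : ContDiffAt ℝ (n + 1 : ℕ) g x) (i : Fin 2) :
    pd i (fun y => f y + g y) =ᶠ[𝓝 x] fun y => pd i f y + pd i g y := by
  filter_upwards [hf.eventually_differentiableAt, hg.eventually_differentiableAt] with y hfy hgy
  exact pd_add hfy hgy i

theorem pd_mul_eventuallyEq {n : ℕ} (hf : ContDiffAt ℝ (n + 1 : ℕ) f x)
    (hg : ContDiffAt ℝ (n + 1 : ℕ) g x) (i : Fin 2) :
    pd i (fun y => f y * g y) =ᶠ[𝓝 x] fun y => pd i f y * g y + f y * pd i g y := by
  filter_upwards [hf.eventually_differentiableAt, hg.eventually_differentiableAt] with y hfy hgy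
  exact pd_mul hfy hgy i

theorem pd_iterate_add_eventuallyEq {k : ℕ} (hf : ContDiffAt ℝ k f x)
    (hg : ContDiffAt ℝ k g x) (i : Fin 2) :
    (pd i)^[k] (fun y => f y + g y) =ᶠ[𝓝 x] fun y => (pd i)^[k] f y + (pd i)^[k] g y := by
  induction k generalizing f g with
  | zero => rfl
  | succ k ih =>
    exact (eventuallyEq_pd_iterate (pd_add_eventuallyEq hf hg i) i k).trans
      (ih (contDiffAt_pd hf i) (contDiffAt_pd hg i))

theorem pd_snd_iterate_pd_fst {k : ℕ} (hf : ContDiffAt ℝ (k + 1 : ℕ) f x) :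
    (pd 1)^[k] (pd 0 f) =ᶠ[𝓝 x] pd 0 ((pd 1)^[k] f) := by
  induction k generalizing f with
  | zero => rfl
  | succ k ih =>
    have hcomm : pd 1 (pd 0 f) =ᶠ[𝓝 x] pd 0 (pd 1 f) := by
      filter_upwards [hf.eventually (by simp)] with y hy
      exact (pd_fst_pd_snd_comm (hy.of_le (by norm_cast; omega))).symm
    exact (eventuallyEq_pd_iterate hcomm 1 k).trans (ih (contDiffAt_pd hf 1))

end PartialDerivatives

noncomputable def mixedPd (a b : ℕ) (f : ℝ × ℝ → ℂ) : ℝ × ℝ → ℂ :=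
  (pd 0)^[a] ((pd 1)^[b] f)

section MixedPartials

variable {f g : ℝ × ℝ → ℂ} {x : ℝ × ℝ}

theorem mixedPd_zero_fun (a b : ℕ) : mixedPd a b 0 = 0 := by
  simp only [mixedPd, pd_iterate_zero_fun]

theorem mixedPd_pd_fst {a b : ℕ} (hf : ContDiffAt ℝ (b + 1 : ℕ) f x) :
    mixedPd a b (pd 0 f) x = mixedPd (a + 1) b f x :=
  (eventuallyEq_pd_iterate (pd_snd_iterate_pd_fst hf) 0 a).eq_of_nhds

theorem mixedPd_pd_snd (a b : ℕ) (f : ℝ × ℝ → ℂ) :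
    mixedPd a b (pd 1 f) = mixedPd a (b + 1) f :=
  rfl

theorem eventuallyEq_mixedPd (h : f =ᶠ[𝓝 x] g) (a b : ℕ) :
    mixedPd a b f =ᶠ[𝓝 x] mixedPd a b g :=
  eventuallyEq_pd_iterate (eventuallyEq_pd_iterate h 1 b) 0 a

theorem mixedPd_add {a b : ℕ} (hf : ContDiffAt ℝ (a + b : ℕ) f x)
    (hg : ContDiffAt ℝ (a + b : ℕ) g x) :
    mixedPd a b (fun y => f y + g y) x = mixedPd a b f x + mixedPd a b g x := by
  have hb : ((b : ℕ) : WithTop ℕ∞) ≤ (a + b : ℕ) := by exact_mod_cast Nat.le_add_left b a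
  exact ((eventuallyEq_pd_iterate
    (pd_iterate_add_eventuallyEq (hf.of_le hb) (hg.of_le hb) 1) 0 a).trans
    (pd_iterate_add_eventuallyEq (contDiffAt_pd_iterate hf 1)
      (contDiffAt_pd_iterate hg 1) 0)).eq_of_nhds

theorem mixedPd_sum {ι : Type*} {s : Finset ι} {F : ι → ℝ × ℝ → ℂ} {a b : ℕ}
    (hF : ∀ j ∈ s, ContDiffAt ℝ (a + b : ℕ) (F j) x) :
    mixedPd a b (fun y => ∑ j ∈ s, F j y) x = ∑ j ∈ s, mixedPd a b (F j) x := by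
  classical
  induction s using Finset.induction_on with
  | empty => simp [← Pi.zero_def, mixedPd_zero_fun]
  | insert j s hj ih =>
    simp only [Finset.sum_insert hj]
    rw [mixedPd_add (hF j (s.mem_insert_self j))
      (ContDiffAt.sum fun k hk => hF k (Finset.mem_insert_of_mem hk)),
      ih fun k hk => hF k (Finset.mem_insert_of_mem hk)]

end MixedPartials

-- Only the partials `∂ₓᵃ ∂ᵧᵇ` in this order are compared; for `C^n` functions they determine
-- the whole `n`-jet by Schwarz's theorem.
structure JetEq (n : ℕ) (x₀ : ℝ × ℝ) (f g : ℝ × ℝ → ℂ) : Prop where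
  contDiffAt_left : ContDiffAt ℝ n f x₀
  contDiffAt_right : ContDiffAt ℝ n g x₀
  mixedPd_eq : ∀ a b, a + b ≤ n → mixedPd a b f x₀ = mixedPd a b g x₀

namespace JetEq

variable {n : ℕ} {x₀ : ℝ × ℝ} {f g f₁ f₂ g₁ g₂ : ℝ × ℝ → ℂ}

theorem apply_eq (h : JetEq n x₀ f g) : f x₀ = g x₀ :=
  h.mixedPd_eq 0 0 (Nat.zero_le n)

theorem of_le {m : ℕ} (h : JetEq n x₀ f g) (hmn : m ≤ n) : JetEq m x₀ f g where
  contDiffAt_left := h.contDiffAt_left.of_le (by exact_mod_cast hmn)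
  contDiffAt_right := h.contDiffAt_right.of_le (by exact_mod_cast hmn)
  mixedPd_eq a b hab := h.mixedPd_eq a b (hab.trans hmn)

theorem congr_eventuallyEq (h : JetEq n x₀ f₁ g₁) (hf : f₂ =ᶠ[𝓝 x₀] f₁)
    (hg : g₂ =ᶠ[𝓝 x₀] g₁) : JetEq n x₀ f₂ g₂ where
  contDiffAt_left := h.contDiffAt_left.congr_of_eventuallyEq hf
  contDiffAt_right := h.contDiffAt_right.congr_of_eventuallyEq hg
  mixedPd_eq a b hab := by
    rw [(eventuallyEq_mixedPd hf a b).eq_of_nhds, (eventuallyEq_mixedPd hg a b).eq_of_nhds,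
      h.mixedPd_eq a b hab]

theorem add (hf : JetEq n x₀ f₁ f₂) (hg : JetEq n x₀ g₁ g₂) :
    JetEq n x₀ (fun y => f₁ y + g₁ y) (fun y => f₂ y + g₂ y) where
  contDiffAt_left := hf.contDiffAt_left.add hg.contDiffAt_left
  contDiffAt_right := hf.contDiffAt_right.add hg.contDiffAt_right
  mixedPd_eq a b hab := by
    have hab' : ((a + b : ℕ) : WithTop ℕ∞) ≤ n := by exact_mod_cast hab
    rw [mixedPd_add (hf.contDiffAt_left.of_le hab') (hg.contDiffAt_left.of_le hab'),
      mixedPd_add (hf.contDiffAt_right.of_le hab') (hg.contDiffAt_right.of_le hab'),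
      hf.mixedPd_eq a b hab, hg.mixedPd_eq a b hab]

theorem map_pd (h : JetEq (n + 1) x₀ f g) (i : Fin 2) : JetEq n x₀ (pd i f) (pd i g) where
  contDiffAt_left := contDiffAt_pd h.contDiffAt_left i
  contDiffAt_right := contDiffAt_pd h.contDiffAt_right i
  mixedPd_eq a b hab := by
    have hb : ((b + 1 : ℕ) : WithTop ℕ∞) ≤ (n + 1 : ℕ) := by exact_mod_cast by omega
    fin_cases i
    · rw [Fin.zero_eta, mixedPd_pd_fst (h.contDiffAt_left.of_le hb),
        mixedPd_pd_fst (h.contDiffAt_right.of_le hb), h.mixedPd_eq _ _ (by omega)]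
    · rw [Fin.mk_one, mixedPd_pd_snd, mixedPd_pd_snd, h.mixedPd_eq _ _ (by omega)]

-- Every `mixedPd a b` of positive order factors through `pd 0` or `pd 1` without reordering.
theorem of_pd (hf : ContDiffAt ℝ (n + 1 : ℕ) f x₀) (hg : ContDiffAt ℝ (n + 1 : ℕ) g x₀)
    (h₀ : f x₀ = g x₀) (hpd : ∀ i, JetEq n x₀ (pd i f) (pd i g)) :
    JetEq (n + 1) x₀ f g where
  contDiffAt_left := hf
  contDiffAt_right := hg
  mixedPd_eq
    | 0, 0, _ => h₀
    | a + 1, 0, hab => (hpd 0).mixedPd_eq a 0 (by omega)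
    | a, b + 1, hab => (hpd 1).mixedPd_eq a b (by omega)

theorem mul_left (hg : ContDiffAt ℝ n g x₀) (h : JetEq n x₀ f₁ f₂) :
    JetEq n x₀ (fun y => g y * f₁ y) (fun y => g y * f₂ y) := by
  induction n generalizing g f₁ f₂ with
  | zero =>
    refine ⟨hg.mul h.contDiffAt_left, hg.mul h.contDiffAt_right, fun a b hab => ?_⟩
    obtain ⟨rfl, rfl⟩ : a = 0 ∧ b = 0 := by omega
    exact congrArg (g x₀ * ·) h.apply_eq
  | succ n ih =>
    refine of_pd (hg.mul h.contDiffAt_left) (hg.mul h.contDiffAt_right)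
      (congrArg (g x₀ * ·) h.apply_eq) fun i => ?_
    have hleibniz := (ih (contDiffAt_pd hg i) (h.of_le n.le_succ)).add
      (ih (hg.of_le (by simp)) (h.map_pd i))
    exact hleibniz.congr_eventuallyEq (pd_mul_eventuallyEq hg h.contDiffAt_left i)
      (pd_mul_eventuallyEq hg h.contDiffAt_right i)

end JetEq

theorem taylorZero_of_jetEq {n : ℕ} {x₀ : ℝ × ℝ} {f g : ℝ × ℝ → ℂ} (h : JetEq n x₀ f g)
    (hg : g =ᶠ[𝓝 x₀] 0) : taylorZero n f x₀ := fun a b hab => by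
  rw [← mixedPd, h.mixedPd_eq a b hab, (eventuallyEq_mixedPd hg a b).eq_of_nhds,
    mixedPd_zero_fun]
  rfl

noncomputable def monomialAt (x₀ : ℝ × ℝ) (C : ℂ) (a b : ℕ) : ℝ × ℝ → ℂ :=
  fun x => C * ((x.1 - x₀.1 : ℝ) : ℂ) ^ a * ((x.2 - x₀.2 : ℝ) : ℂ) ^ b

section Monomials

variable (x₀ : ℝ × ℝ) (C : ℂ) (a b : ℕ)

theorem contDiff_monomialAt {n : WithTop ℕ∞} : ContDiff ℝ n (monomialAt x₀ C a b) :=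
  (contDiff_const.mul ((ofRealCLM.contDiff.comp (contDiff_fst.sub contDiff_const)).pow a)).mul
    ((ofRealCLM.contDiff.comp (contDiff_snd.sub contDiff_const)).pow b)

theorem hasFDerivAt_monomialAt (x : ℝ × ℝ) :
    HasFDerivAt (monomialAt x₀ C a b)
      (monomialAt x₀ (C * a) (a - 1) b x • ofRealCLM.comp (ContinuousLinearMap.fst ℝ ℝ ℝ) +
        monomialAt x₀ (C * b) a (b - 1) x • ofRealCLM.comp (ContinuousLinearMap.snd ℝ ℝ ℝ))
      x := by
  have h₁ := ((ofRealCLM.hasFDerivAt (x := x.1 - x₀.1)).comp x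
    (hasFDerivAt_fst.sub_const x₀.1)).pow a
  have h₂ := ((ofRealCLM.hasFDerivAt (x := x.2 - x₀.2)).comp x
    (hasFDerivAt_snd.sub_const x₀.2)).pow b
  have h : HasFDerivAt (monomialAt x₀ C a b) _ x :=
    ((hasFDerivAt_const C x).fun_mul h₁).fun_mul h₂
  refine h.congr_fderiv ?_
  ext <;>
  simp only [monomialAt, Function.comp_apply, ofRealCLM_apply, ofReal_sub, nsmul_eq_mul, smul_add,
    ContinuousLinearMap.add_comp, ContinuousLinearMap.smul_comp, ContinuousLinearMap.zero_comp,
    ContinuousLinearMap.comp_apply, ContinuousLinearMap.inl_apply, ContinuousLinearMap.inr_apply,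
    ContinuousLinearMap.coe_fst', ContinuousLinearMap.coe_snd', add_apply, smul_apply, zero_apply,
    smul_eq_mul, ofReal_zero, ofReal_one, mul_zero, mul_one, add_zero, zero_add] <;>
  ring

theorem pd_fst_monomialAt : pd 0 (monomialAt x₀ C a b) = monomialAt x₀ (C * a) (a - 1) b := by
  ext x
  simp [pd, (hasFDerivAt_monomialAt x₀ C a b x).fderiv]

theorem pd_snd_monomialAt : pd 1 (monomialAt x₀ C a b) = monomialAt x₀ (C * b) a (b - 1) := by
  ext x
  simp [pd, (hasFDerivAt_monomialAt x₀ C a b x).fderiv]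

theorem pd_fst_iterate_monomialAt (k : ℕ) :
    (pd 0)^[k] (monomialAt x₀ C a b) = monomialAt x₀ (C * a.descFactorial k) (a - k) b := by
  induction k with
  | zero => simp
  | succ k ih =>
    rw [Function.iterate_succ_apply', ih, pd_fst_monomialAt, Nat.descFactorial_succ,
      Nat.sub_sub]
    push_cast
    ring_nf

theorem pd_snd_iterate_monomialAt (k : ℕ) :
    (pd 1)^[k] (monomialAt x₀ C a b) = monomialAt x₀ (C * b.descFactorial k) a (b - k) := by
  induction k with
  | zero => simp
  | succ k ih =>
    rw [Function.iterate_succ_apply', ih, pd_snd_monomialAt, Nat.descFactorial_succ,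
      Nat.sub_sub]
    push_cast
    ring_nf

theorem monomialAt_self : monomialAt x₀ C a b x₀ = if a = 0 ∧ b = 0 then C else 0 := by
  split_ifs with h
  · simp [monomialAt, h.1, h.2]
  · rcases not_and_or.mp h with ha | hb <;> simp [monomialAt, *]

theorem mixedPd_monomialAt (A B : ℕ) :
    mixedPd A B (monomialAt x₀ C a b) x₀ =
      if a = A ∧ b = B then C * (A.factorial * B.factorial : ℕ) else 0 := by
  rw [mixedPd, pd_snd_iterate_monomialAt, pd_fst_iterate_monomialAt, monomialAt_self]
  by_cases h : a = A ∧ b = B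
  · obtain ⟨rfl, rfl⟩ := h
    simp only [tsub_self, and_self, ↓reduceIte, Nat.descFactorial_self, Nat.cast_mul]
    ring
  · rw [if_neg h]
    split_ifs with h'
    · rcases (by omega : a < A ∨ b < B) with hA | hB
      · simp [Nat.descFactorial_eq_zero_iff_lt.mpr hA]
      · simp [Nat.descFactorial_eq_zero_iff_lt.mpr hB]
    · rfl

end Monomials

section TaylorPolynomial

variable (q : ℕ) (f : ℝ × ℝ → ℂ) (x₀ : ℝ × ℝ)

theorem tpoly_eq_sum_monomialAt :
    tpoly q f x₀ = fun x => ∑ a ∈ Finset.range (q + 1), ∑ b ∈ Finset.range (q + 1 - a),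
      monomialAt x₀ (mixedPd a b f x₀ / (a.factorial * b.factorial : ℕ)) a b x :=
  rfl

theorem contDiff_tpoly {n : WithTop ℕ∞} : ContDiff ℝ n (tpoly q f x₀) := by
  rw [tpoly_eq_sum_monomialAt]
  exact ContDiff.sum fun a _ => ContDiff.sum fun b _ => contDiff_monomialAt _ _ _ _

theorem mixedPd_tpoly (A B : ℕ) :
    mixedPd A B (tpoly q f x₀) x₀ = if A + B ≤ q then mixedPd A B f x₀ else 0 := by
  rw [tpoly_eq_sum_monomialAt, mixedPd_sum fun a _ =>
    (ContDiff.sum fun b _ => contDiff_monomialAt _ _ _ _).contDiffAt]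
  simp only [mixedPd_sum fun b _ => (contDiff_monomialAt _ _ _ _).contDiffAt, mixedPd_monomialAt]
  simp only [Nat.cast_mul, ite_and, Finset.sum_ite_irrel, Finset.sum_ite_eq', Finset.mem_range,
    Finset.sum_const_zero, Order.lt_add_one_iff, isUnit_iff_ne_zero, ne_eq, mul_eq_zero,
    Nat.cast_eq_zero, Nat.factorial_ne_zero, or_self, not_false_eq_true, IsUnit.div_mul_cancel]
  split_ifs <;> first | rfl | omega

theorem jetEq_tpoly (hf : ContDiffAt ℝ q f x₀) : JetEq q x₀ (tpoly q f x₀) f :=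
  ⟨(contDiff_tpoly q f x₀).contDiffAt, hf, fun a b hab => by rw [mixedPd_tpoly, if_pos hab]⟩

end TaylorPolynomial

/-- If `(p, v_x, v_y) ∈ C^{d+1} × C^d × C^d` is an exact solution of the
first-order system `S₁ = S₂ = S₃ = 0` in a neighborhood of `x₀`, then the Taylor
truncations `(𝒯_d p, 𝒯_{d-1} v_x, 𝒯_{d-1} v_y)` satisfy the quasi-Trefftz conditions:
`𝒯_{d-1}(Sᵢ(truncations)) = 0` for `i = 1, 2` and `𝒯_{d-2}(S₃(truncations)) = 0`. -/
theorem taylor_truncation_in_quasiTrefftz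
    (x₀ : ℝ × ℝ) (d : ℕ) (hd : 2 ≤ d)
    (ω ρ : ℝ) (hρ : 0 < ρ)
    (c : ℝ × ℝ → ℝ) (hc : ContDiffAt ℝ (d - 2) c x₀) (hc0 : c x₀ ≠ 0)
    (p vx vy : ℝ × ℝ → ℂ)
    (hp : ContDiffAt ℝ (d + 1) p x₀) (hvx : ContDiffAt ℝ d vx x₀)
    (hvy : ContDiffAt ℝ d vy x₀)
    (hS1 : ∀ᶠ x in nhds x₀, -(Complex.I * ω * ρ) * vx x + pd 0 p x = 0)
    (hS2 : ∀ᶠ x in nhds x₀, -(Complex.I * ω * ρ) * vy x + pd 1 p x = 0)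
    (hS3 : ∀ᶠ x in nhds x₀,
      -(Complex.I * ω / (ρ * (c x : ℂ) ^ 2)) * p x + pd 0 vx x + pd 1 vy x = 0) :
    taylorZero (d - 1)
      (fun x => -(Complex.I * ω * ρ) * tpoly (d - 1) vx x₀ x + pd 0 (tpoly d p x₀) x) x₀ ∧
    taylorZero (d - 1)
      (fun x => -(Complex.I * ω * ρ) * tpoly (d - 1) vy x₀ x + pd 1 (tpoly d p x₀) x) x₀ ∧
    taylorZero (d - 2)
      (fun x => -(Complex.I * ω / (ρ * (c x : ℂ) ^ 2)) * tpoly d p x₀ x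
          + pd 0 (tpoly (d - 1) vx x₀) x + pd 1 (tpoly (d - 1) vy x₀) x) x₀ := by
  obtain ⟨n, rfl⟩ := Nat.exists_eq_add_of_le' hd
  rw [show n + 2 - 1 = n + 1 by omega, show n + 2 - 2 = n by omega]
  have hc' : ContDiffAt ℝ n c x₀ := by
    convert hc using 1
    norm_cast
  have hcoef : ContDiffAt ℝ n (fun x => -(I * ω / (ρ * (c x : ℂ) ^ 2))) x₀ := by
    have hden := contDiffAt_const (c := (ρ : ℂ)).mul ((ofRealCLM.contDiff.contDiffAt.comp x₀ hc').pow 2)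
    simpa [div_eq_mul_inv] using (contDiffAt_const.mul (hden.inv (by simp [hρ.ne', hc0]))).neg
  have jp : JetEq (n + 2) x₀ (tpoly (n + 2) p x₀) p :=
    jetEq_tpoly _ _ _ (hp.of_le (by norm_cast; omega))
  have jvx : JetEq (n + 1) x₀ (tpoly (n + 1) vx x₀) vx :=
    jetEq_tpoly _ _ _ (hvx.of_le (by norm_cast; omega))
  have jvy : JetEq (n + 1) x₀ (tpoly (n + 1) vy x₀) vy :=
    jetEq_tpoly _ _ _ (hvy.of_le (by norm_cast; omega))
  refine ⟨taylorZero_of_jetEq ((jvx.mul_left contDiffAt_const).add (jp.map_pd 0)) hS1,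
    taylorZero_of_jetEq ((jvy.mul_left contDiffAt_const).add (jp.map_pd 1)) hS2,
    taylorZero_of_jetEq ?_ hS3⟩
  exact (((jp.of_le (by omega)).mul_left hcoef).add (jvx.map_pd 0)).add (jvy.map_pd 1)
end
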